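/- arXiv:2205.00482 — 8 statements merged into one kernel-verified Lean document; each statement's English description precedes it below -/
import Mathlib

section
/- Let x, y, n be integers with gcd(x, y) = 1. Then the following two conditions are equivalent: (i) there exist integers a, b with n = ay − bx, gcd(x, a) = 1 and gcd(y, b) = 1; (ii) gcd(x, n) = 1 and gcd(y, n) = 1. -/
namespace IsCoprime

variable {R : Type*} [CommRing R] {x y n : R}

theorem mul_sub_mul (hxy : IsCoprime x y) {a b : R} (hxa : IsCoprime x a) (hyb : IsCoprime y b) :
    IsCoprime x (a * y - b * x) ∧ IsCoprime y (a * y - b * x) := by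
  refine ⟨sub_mul_right_right_iff.mpr (hxa.mul_right hxy), ?_⟩
  rw [← neg_right_iff, neg_sub]
  exact sub_mul_right_right_iff.mpr (hyb.mul_right hxy.symm)

/-- With `u * x + v * y = 1`, take `a = n * v` and `b = -(n * u)`. -/
theorem exists_eq_mul_sub_mul (hxy : IsCoprime x y) (hxn : IsCoprime x n) (hyn : IsCoprime y n) :
    ∃ a b, n = a * y - b * x ∧ IsCoprime x a ∧ IsCoprime y b := by
  obtain ⟨u, v, huv⟩ := hxy
  have hxv : IsCoprime x v := ⟨u, y, by rw [← huv]; ring⟩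
  have hyu : IsCoprime y u := ⟨v, x, by rw [← huv]; ring⟩
  refine ⟨n * v, -(n * u), ?_, hxn.mul_right hxv, (hyn.mul_right hyu).neg_right⟩
  linear_combination -n * huv

theorem exists_eq_mul_sub_mul_iff (hxy : IsCoprime x y) :
    (∃ a b, n = a * y - b * x ∧ IsCoprime x a ∧ IsCoprime y b) ↔
      IsCoprime x n ∧ IsCoprime y n := by
  constructor
  · rintro ⟨a, b, rfl, hxa, hyb⟩
    exact hxy.mul_sub_mul hxa hyb
  · rintro ⟨hxn, hyn⟩
    exact hxy.exists_eq_mul_sub_mul hxn hyn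

end IsCoprime

/-- For coprime integers `x, y` and any integer `n`, the existence of
`a, b` with `n = a*y - b*x`, `gcd(x,a) = 1` and `gcd(y,b) = 1` is equivalent to
`gcd(x,n) = 1` and `gcd(y,n) = 1`. -/
theorem stmt_1 (x y n : ℤ) (hxy : Int.gcd x y = 1) :
    (∃ a b : ℤ, n = a * y - b * x ∧ Int.gcd x a = 1 ∧ Int.gcd y b = 1) ↔
      (Int.gcd x n = 1 ∧ Int.gcd y n = 1) := by
  simp only [← Int.isCoprime_iff_gcd_eq_one] at hxy ⊢
  exact hxy.exists_eq_mul_sub_mul_iff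
end

section
/- Let n ∈ ℤ and δ₁, δ₂, ε ∈ {1, −1}. If (x, y) ∈ S^{δ₂,δ₁}_{n,ε}, then both mutations (−x − nδ₂y, y) and (x, −y − nδ₁x) also belong to S^{δ₂,δ₁}_{n,ε}. -/
/-- The set `S^{δ₂,δ₁}_{n,ε}` of pairs `(x,y) ∈ ℤ²` with `δ₂x² + δ₁y² + nxy = ε`
and `gcd(x,n) = gcd(y,n) = 1`. -/
def Sset (n δ₂ δ₁ ε : ℤ) : Set (ℤ × ℤ) :=
  {p | δ₂ * p.1 ^ 2 + δ₁ * p.2 ^ 2 + n * p.1 * p.2 = ε ∧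
    Int.gcd p.1 n = 1 ∧ Int.gcd p.2 n = 1}

/- As a polynomial in `x`, `a x² + n y x` has the two roots `x` and `-x - n a y` of the same
value when `a² = 1` (Vieta), which is why mutation preserves the form. -/
theorem quadForm_mutation_left {R : Type*} [CommRing R] (n a b x y : R) (ha : a ^ 2 = 1) :
    a * (-x - n * a * y) ^ 2 + b * y ^ 2 + n * (-x - n * a * y) * y =
      a * x ^ 2 + b * y ^ 2 + n * x * y := by
  linear_combination (2 * x + n * a * y) * n * y * ha

theorem quadForm_mutation_right {R : Type*} [CommRing R] (n a b x y : R) (hb : b ^ 2 = 1) :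
    a * x ^ 2 + b * (-y - n * b * x) ^ 2 + n * x * (-y - n * b * x) =
      a * x ^ 2 + b * y ^ 2 + n * x * y := by
  linear_combination quadForm_mutation_left n b a y x hb

theorem Int.gcd_neg_sub_mul_left (x n k : ℤ) : Int.gcd (-x - n * k) n = Int.gcd x n := by
  rw [Int.gcd_sub_mul_left_left, Int.neg_gcd]

theorem stmt_2_general (n δ₁ δ₂ ε x y : ℤ)
    (hδ₁ : δ₁ = 1 ∨ δ₁ = -1) (hδ₂ : δ₂ = 1 ∨ δ₂ = -1)
    (hxy : (x, y) ∈ Sset n δ₂ δ₁ ε) :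
    (-x - n * δ₂ * y, y) ∈ Sset n δ₂ δ₁ ε ∧
      (x, -y - n * δ₁ * x) ∈ Sset n δ₂ δ₁ ε := by
  obtain ⟨hform, hx, hy⟩ := hxy
  refine ⟨⟨?_, ?_, hy⟩, ⟨?_, hx, ?_⟩⟩
  · rw [quadForm_mutation_left n δ₂ δ₁ x y (sq_eq_one_iff.mpr hδ₂), hform]
  · rwa [mul_assoc, Int.gcd_neg_sub_mul_left]
  · rw [quadForm_mutation_right n δ₂ δ₁ x y (sq_eq_one_iff.mpr hδ₁), hform]
  · rwa [mul_assoc, Int.gcd_neg_sub_mul_left]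

/-- the two mutations of an element of `S^{δ₂,δ₁}_{n,ε}` belong to
`S^{δ₂,δ₁}_{n,ε}`. -/
theorem stmt_2 (n δ₁ δ₂ ε x y : ℤ)
    (hδ₁ : δ₁ = 1 ∨ δ₁ = -1) (hδ₂ : δ₂ = 1 ∨ δ₂ = -1) (hε : ε = 1 ∨ ε = -1)
    (hxy : (x, y) ∈ Sset n δ₂ δ₁ ε) :
    (-x - n * δ₂ * y, y) ∈ Sset n δ₂ δ₁ ε ∧
      (x, -y - n * δ₁ * x) ∈ Sset n δ₂ δ₁ ε :=
  stmt_2_general n δ₁ δ₂ ε x y hδ₁ hδ₂ hxy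
end

section
/- Let n ∈ ℤ and δ₁, δ₂, ε ∈ {1, −1}. If the set S^{δ₂,δ₁}_{n,ε} is nonempty, then |n| ∈ {1, 3}, and the minimum of |xy| over all (x, y) ∈ S^{δ₂,δ₁}_{n,ε} equals (|n| − 1)/2; that is, the minimum is 0 when |n| = 1 and 1 when |n| = 3. -/
/-!
For fixed `y`, the equation is quadratic in `x`, so `(x, y) ↦ (-(x + δ₂ n y), y)`
maps `S^{δ₂,δ₁}_{n,ε}` to itself (it does not change `gcd(x, n)`), and the two roots have product
`δ₂ (δ₁ y² - ε)`. Hence at an element minimizing `|x| + |y|` we get `x² ≤ |δ₁ y² - ε| ≤ y² + 1`,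
and symmetrically `y² ≤ x² + 1`; together with the equation this forces `|x|, |y| ≤ 1`.
Plugging in such an element: if `xy = 0` then `gcd(0, n) = 1` gives `|n| = 1`; otherwise
`n xy = ε - δ₂ - δ₁`, so `|n| = |ε - δ₂ - δ₁| ∈ {1, 3}`, and when `|n| = 3` no coordinate of an
element of `S` can vanish.
-/

section

variable {n δ₁ δ₂ ε : ℤ}

theorem gcd_zero_left_eq_one_iff : Int.gcd 0 n = 1 ↔ |n| = 1 := by
  rw [Int.gcd_zero_left, Int.abs_eq_natAbs]
  omega

theorem swap_mem_Sset {p : ℤ × ℤ} : p.swap ∈ Sset n δ₁ δ₂ ε ↔ p ∈ Sset n δ₂ δ₁ ε := by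
  simp only [Sset, Set.mem_ofPred_eq, Prod.fst_swap, Prod.snd_swap]
  constructor <;> rintro ⟨h, h₁, h₂⟩ <;> exact ⟨by linear_combination h, h₂, h₁⟩

theorem vieta_mem_Sset (hδ₂ : IsUnit δ₂) {x y : ℤ} (h : (x, y) ∈ Sset n δ₂ δ₁ ε) :
    (-(x + n * (δ₂ * y)), y) ∈ Sset n δ₂ δ₁ ε := by
  obtain ⟨heq, hx, hy⟩ := h
  refine ⟨?_, ?_, hy⟩
  · linear_combination heq + (2 * n * x * y + δ₂ * n ^ 2 * y ^ 2) * Int.isUnit_sq hδ₂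
  · rwa [Int.neg_gcd, Int.gcd_add_mul_left_left]

theorem mul_vieta (hδ₂ : IsUnit δ₂) {x y : ℤ} (heq : δ₂ * x ^ 2 + δ₁ * y ^ 2 + n * x * y = ε) :
    x * -(x + n * (δ₂ * y)) = δ₂ * (δ₁ * y ^ 2 - ε) := by
  linear_combination (-δ₂) * heq + x ^ 2 * Int.isUnit_sq hδ₂

theorem sq_le_sq_add_one_of_minimalFor (hδ₁ : IsUnit δ₁) (hδ₂ : IsUnit δ₂) (hε : IsUnit ε)
    {x y : ℤ} (h : MinimalFor (· ∈ Sset n δ₂ δ₁ ε) (fun p ↦ p.1.natAbs + p.2.natAbs) (x, y)) :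
    x ^ 2 ≤ y ^ 2 + 1 := by
  set x' := -(x + n * (δ₂ * y))
  have hle : |x| ≤ |x'| := by
    have := h.2 (vieta_mem_Sset hδ₂ h.1)
    simp only [Int.abs_eq_natAbs] at this ⊢
    omega
  calc x ^ 2 = |x| * |x| := by rw [sq, abs_mul_abs_self]
    _ ≤ |x| * |x'| := mul_le_mul_of_nonneg_left hle (abs_nonneg x)
    _ = |δ₁ * y ^ 2 - ε| := by
      rw [← abs_mul, mul_vieta hδ₂ h.1.1, abs_mul, Int.isUnit_iff_abs_eq.1 hδ₂, one_mul]
    _ ≤ |δ₁ * y ^ 2| + |ε| := abs_sub _ _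
    _ = y ^ 2 + 1 := by
      rw [abs_mul, Int.isUnit_iff_abs_eq.1 hδ₁, Int.isUnit_iff_abs_eq.1 hε, one_mul, abs_sq]

theorem eq_zero_of_sq_eq_sq_add_one {a b : ℤ} (h : a ^ 2 = b ^ 2 + 1) : b = 0 := by
  have hlt : |b| < |a| := sq_lt_sq.1 (by omega)
  have hle : (|b| + 1) ^ 2 ≤ |a| ^ 2 := pow_le_pow_left₀ (by positivity) hlt 2
  exact abs_eq_zero.1 (by nlinarith [sq_abs a, sq_abs b, abs_nonneg b])

theorem abs_le_one_of_sq_le_sq_add_one (hε : IsUnit ε) {x y : ℤ}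
    (heq : δ₂ * x ^ 2 + δ₁ * y ^ 2 + n * x * y = ε)
    (hx : x ^ 2 ≤ y ^ 2 + 1) (hy : y ^ 2 ≤ x ^ 2 + 1) : |x| ≤ 1 ∧ |y| ≤ 1 := by
  simp only [← sq_le_one_iff_abs_le_one]
  rcases lt_trichotomy (x ^ 2) (y ^ 2) with hlt | hsq | hgt
  · have := eq_zero_of_sq_eq_sq_add_one (a := y) (b := x) (by omega)
    subst this
    omega
  · have hdvd : x ^ 2 ∣ ε := by
      rcases sq_eq_sq_iff_eq_or_eq_neg.1 hsq with rfl | rfl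
      · exact ⟨δ₂ + δ₁ + n, by linear_combination -heq⟩
      · exact ⟨δ₂ + δ₁ - n, by linear_combination -heq⟩
    have := Int.isUnit_sq ((isUnit_pow_iff two_ne_zero).1 (isUnit_of_dvd_unit hdvd hε))
    omega
  · have := eq_zero_of_sq_eq_sq_add_one (a := x) (b := y) (by omega)
    subst this
    omega

theorem exists_mem_Sset_abs_le_one (hδ₁ : IsUnit δ₁) (hδ₂ : IsUnit δ₂) (hε : IsUnit ε)
    (hne : (Sset n δ₂ δ₁ ε).Nonempty) : ∃ x y, (x, y) ∈ Sset n δ₂ δ₁ ε ∧ |x| ≤ 1 ∧ |y| ≤ 1 := by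
  obtain ⟨⟨x, y⟩, h⟩ := exists_minimalFor_of_wellFoundedLT _ (fun p ↦ p.1.natAbs + p.2.natAbs) hne
  have h' : MinimalFor (· ∈ Sset n δ₁ δ₂ ε) (fun p ↦ p.1.natAbs + p.2.natAbs) (y, x) :=
    ⟨swap_mem_Sset.2 h.1, fun p hp hle ↦ by
      have := h.2 ((swap_mem_Sset (p := p.swap)).1 hp)
      simp only [Prod.fst_swap, Prod.snd_swap] at this hle ⊢
      omega⟩
  exact ⟨x, y, h.1, abs_le_one_of_sq_le_sq_add_one hε h.1.1
    (sq_le_sq_add_one_of_minimalFor hδ₁ hδ₂ hε h) (sq_le_sq_add_one_of_minimalFor hδ₂ hδ₁ hε h')⟩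

theorem abs_eq_one_of_mem_Sset_of_mul_eq_zero {p : ℤ × ℤ} (hp : p ∈ Sset n δ₂ δ₁ ε)
    (h0 : p.1 * p.2 = 0) : |n| = 1 := by
  rcases mul_eq_zero.1 h0 with h | h
  · exact gcd_zero_left_eq_one_iff.1 (h ▸ hp.2.1)
  · exact gcd_zero_left_eq_one_iff.1 (h ▸ hp.2.2)

theorem one_le_abs_mul_of_mem_Sset (hn : |n| ≠ 1) {p : ℤ × ℤ} (hp : p ∈ Sset n δ₂ δ₁ ε) :
    1 ≤ |p.1 * p.2| :=
  Int.one_le_abs fun h0 ↦ hn (abs_eq_one_of_mem_Sset_of_mul_eq_zero hp h0)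

theorem abs_eq_of_mem_Sset_of_abs_eq_one {x y : ℤ} (h : (x, y) ∈ Sset n δ₂ δ₁ ε)
    (hx : |x| = 1) (hy : |y| = 1) : |n| = |ε - δ₂ - δ₁| := by
  have hx2 : x ^ 2 = 1 := by rw [← sq_abs, hx, one_pow]
  have hy2 : y ^ 2 = 1 := by rw [← sq_abs, hy, one_pow]
  calc |n| = |n * x * y| := by rw [abs_mul, abs_mul, hx, hy, mul_one, mul_one]
    _ = |ε - δ₂ - δ₁| := by congr 1; linear_combination h.1 - δ₂ * hx2 - δ₁ * hy2

theorem one_zero_mem_Sset (hn : |n| = 1) : ((1 : ℤ), (0 : ℤ)) ∈ Sset n ε δ₁ ε :=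
  ⟨by ring, Int.gcd_one_left n, gcd_zero_left_eq_one_iff.2 hn⟩

theorem zero_one_mem_Sset (hn : |n| = 1) : ((0 : ℤ), (1 : ℤ)) ∈ Sset n δ₂ ε ε :=
  swap_mem_Sset.1 (one_zero_mem_Sset hn)

theorem isLeast_zero_of_mem_Sset {p : ℤ × ℤ} (hp : p ∈ Sset n δ₂ δ₁ ε) (h0 : p.1 * p.2 = 0) :
    IsLeast {m : ℤ | ∃ p ∈ Sset n δ₂ δ₁ ε, m = |p.1 * p.2|} 0 :=
  ⟨⟨p, hp, by rw [h0, abs_zero]⟩, fun _ ⟨_, _, hm⟩ ↦ hm ▸ abs_nonneg _⟩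

theorem isLeast_one_of_mem_Sset (hn : |n| ≠ 1) {p : ℤ × ℤ} (hp : p ∈ Sset n δ₂ δ₁ ε)
    (h1 : |p.1 * p.2| = 1) : IsLeast {m : ℤ | ∃ p ∈ Sset n δ₂ δ₁ ε, m = |p.1 * p.2|} 1 :=
  ⟨⟨p, hp, h1.symm⟩, fun _ ⟨_, hq, hm⟩ ↦ hm ▸ one_le_abs_mul_of_mem_Sset hn hq⟩

end

theorem abs_sub_sub_eq_three_or {δ₁ δ₂ ε : ℤ}
    (hδ₁ : δ₁ = 1 ∨ δ₁ = -1) (hδ₂ : δ₂ = 1 ∨ δ₂ = -1) (hε : ε = 1 ∨ ε = -1) :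
    |ε - δ₂ - δ₁| = 3 ∨ |ε - δ₂ - δ₁| = 1 ∧ (δ₂ = ε ∨ δ₁ = ε) := by
  rcases hδ₁ with rfl | rfl <;> rcases hδ₂ with rfl | rfl <;> rcases hε with rfl | rfl <;> norm_num

/-- if `S^{δ₂,δ₁}_{n,ε} ≠ ∅` then `|n| ∈ {1,3}` and the minimum of
`|xy|` over `(x,y) ∈ S^{δ₂,δ₁}_{n,ε}` equals `(|n| - 1)/2`. -/
theorem stmt_3 (n δ₁ δ₂ ε : ℤ)
    (hδ₁ : δ₁ = 1 ∨ δ₁ = -1) (hδ₂ : δ₂ = 1 ∨ δ₂ = -1) (hε : ε = 1 ∨ ε = -1)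
    (hne : (Sset n δ₂ δ₁ ε).Nonempty) :
    (|n| = 1 ∨ |n| = 3) ∧
      IsLeast {m : ℤ | ∃ p ∈ Sset n δ₂ δ₁ ε, m = |p.1 * p.2|} ((|n| - 1) / 2) := by
  obtain ⟨x, y, h, hx, hy⟩ := exists_mem_Sset_abs_le_one (Int.isUnit_iff.2 hδ₁)
    (Int.isUnit_iff.2 hδ₂) (Int.isUnit_iff.2 hε) hne
  rcases eq_or_ne (x * y) 0 with h0 | h0
  · have hn := abs_eq_one_of_mem_Sset_of_mul_eq_zero h h0
    rw [hn]
    exact ⟨.inl rfl, isLeast_zero_of_mem_Sset h h0⟩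
  have hx1 : |x| = 1 := le_antisymm hx (Int.one_le_abs (left_ne_zero_of_mul h0))
  have hy1 : |y| = 1 := le_antisymm hy (Int.one_le_abs (right_ne_zero_of_mul h0))
  have hn := abs_eq_of_mem_Sset_of_abs_eq_one h hx1 hy1
  rcases abs_sub_sub_eq_three_or hδ₁ hδ₂ hε with h3 | ⟨h1, hδ⟩
  · rw [hn, h3]
    refine ⟨.inr rfl, isLeast_one_of_mem_Sset (by rw [hn, h3]; decide) h ?_⟩
    rw [abs_mul, hx1, hy1, one_mul]
  · obtain ⟨p, hp, hp0⟩ : ∃ p ∈ Sset n δ₂ δ₁ ε, p.1 * p.2 = 0 := by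
      rcases hδ with rfl | rfl
      · exact ⟨(1, 0), one_zero_mem_Sset (hn.trans h1), mul_zero 1⟩
      · exact ⟨(0, 1), zero_one_mem_Sset (hn.trans h1), zero_mul 1⟩
    rw [hn, h1]
    exact ⟨.inl rfl, isLeast_zero_of_mem_Sset hp hp0⟩
end

section
/- Let n ∈ ℤ and δ₁, δ₂, ε ∈ {1, −1}, and suppose x, y ∈ ℤ satisfy δ₂x² + δ₁y² + nxy = ε with |x| > |y| ≥ 1. Then the mutated first coordinate x̂ = −x − nδ₂y satisfies |x̂| < |x|. Symmetrically, if |y| > |x| ≥ 1, then ŷ = −y − nδ₁x satisfies |ŷ| < |y|. -/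
/-!
By Vieta, `x` and `x̂` are the two roots of `δ₂ X² + n y X + δ₁ y² - ε`, so
`x · x̂ = δ₂ (δ₁ y² - ε)` and hence `|x| |x̂| ≤ y² + 1`. When `|x| > |y| ≥ 1` we have
`x² ≥ (|y| + 1)² > y² + 1`, which forces `|x̂| < |x|`.
-/

namespace Mutation

variable {n δ₁ δ₂ ε x y : ℤ}

lemma mul_mutation_eq (hδ₂ : δ₂ ^ 2 = 1) (heq : δ₂ * x ^ 2 + δ₁ * y ^ 2 + n * x * y = ε) :
    x * (-x - n * δ₂ * y) = δ₂ * (δ₁ * y ^ 2 - ε) := by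
  linear_combination (-δ₂) * heq + x ^ 2 * hδ₂

lemma abs_mul_sq_sub_le (hδ₁ : |δ₁| ≤ 1) (hε : |ε| ≤ 1) : |δ₁ * y ^ 2 - ε| ≤ y ^ 2 + 1 :=
  calc |δ₁ * y ^ 2 - ε| ≤ |δ₁| * y ^ 2 + |ε| :=
        (abs_sub (δ₁ * y ^ 2) ε).trans_eq (by rw [abs_mul, abs_sq])
    _ ≤ 1 * y ^ 2 + 1 := by gcongr
    _ = y ^ 2 + 1 := by ring

lemma abs_mutation_lt (hδ₁ : |δ₁| ≤ 1) (hδ₂ : |δ₂| = 1) (hε : |ε| ≤ 1)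
    (heq : δ₂ * x ^ 2 + δ₁ * y ^ 2 + n * x * y = ε) (hxy : |y| < |x|) (hy : 1 ≤ |y|) :
    |-x - n * δ₂ * y| < |x| := by
  have hδ₂_sq : δ₂ ^ 2 = 1 := by rw [← sq_abs, hδ₂, one_pow]
  have hprod : |x| * |-x - n * δ₂ * y| ≤ y ^ 2 + 1 := by
    rw [← abs_mul, mul_mutation_eq hδ₂_sq heq, abs_mul, hδ₂, one_mul]
    exact abs_mul_sq_sub_le hδ₁ hε
  have hx_sq : y ^ 2 + 1 < |x| * |x| := by nlinarith [sq_abs y]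
  exact lt_of_mul_lt_mul_left (hprod.trans_lt hx_sq) (abs_nonneg x)

end Mutation

open Mutation in
/-- for solutions of `δ₂x² + δ₁y² + nxy = ε` with `δ₁, δ₂, ε ∈ {1,-1}`,
if `|x| > |y| ≥ 1` then the mutation `x̂ = -x - nδ₂y` satisfies `|x̂| < |x|`;
symmetrically, if `|y| > |x| ≥ 1` then `ŷ = -y - nδ₁x` satisfies `|ŷ| < |y|`. -/
theorem stmt_6 (n δ₁ δ₂ ε x y : ℤ)
    (hδ₁ : δ₁ = 1 ∨ δ₁ = -1) (hδ₂ : δ₂ = 1 ∨ δ₂ = -1) (hε : ε = 1 ∨ ε = -1)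
    (heq : δ₂ * x ^ 2 + δ₁ * y ^ 2 + n * x * y = ε) :
    (|x| > |y| → |y| ≥ 1 → |(-x - n * δ₂ * y)| < |x|) ∧
      (|y| > |x| → |x| ≥ 1 → |(-y - n * δ₁ * x)| < |y|) := by
  have habs₁ : |δ₁| = 1 := (abs_eq zero_le_one).mpr hδ₁
  have habs₂ : |δ₂| = 1 := (abs_eq zero_le_one).mpr hδ₂
  have habsε : |ε| ≤ 1 := ((abs_eq zero_le_one).mpr hε).le
  have heq_swap : δ₁ * y ^ 2 + δ₂ * x ^ 2 + n * y * x = ε := by linear_combination heq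
  exact ⟨abs_mutation_lt habs₁.le habs₂ habsε heq,
    abs_mutation_lt habs₂.le habs₁ habsε heq_swap⟩
end

section
/- Let δ₁, δ₂ ∈ {1, −1}. If there exist integers x, y with δ₂x² + δ₁y² + 3xy = −1 and gcd(x, 3) = gcd(y, 3) = 1, then δ₁ = δ₂ = 1. Moreover, the integer solutions (x, y) of x² + y² + 3xy = −1 with gcd(x, 3) = gcd(y, 3) = 1 and |xy| = 1 are exactly (1, −1) and (−1, 1). -/
/-!
Reducing mod 3 kills the cross term `3xy`, and `x² ≡ y² ≡ 1` for `x, y` prime to 3, so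
`δ₂ + δ₁ ≡ -1 (mod 3)`; among the sign pairs only `δ₁ = δ₂ = 1` satisfies this.
For the second part, `xy = 1` would force `x² + y² = -4`, so `xy = -1`.
-/

theorem ZMod.intCast_ne_zero_of_gcd_eq_one {n : ℕ} (hn : n ≠ 1) {x : ℤ}
    (hx : Int.gcd x n = 1) : (x : ZMod n) ≠ 0 := by
  rw [Ne, ZMod.intCast_zmod_eq_zero_iff_dvd]
  intro hdvd
  have hunit : (n : ℤ) ∣ 1 := by simpa [hx] using Int.dvd_coe_gcd hdvd dvd_rfl
  exact hn (by exact_mod_cast Int.eq_one_of_dvd_one (by positivity) hunit)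

theorem ZMod.sq_eq_one_of_ne_zero_three : ∀ a : ZMod 3, a ≠ 0 → a ^ 2 = 1 := by
  decide

theorem intCast_add_eq_neg_one_of_sign_form {a b x y : ℤ}
    (h : a * x ^ 2 + b * y ^ 2 + 3 * x * y = -1) (hx : Int.gcd x 3 = 1) (hy : Int.gcd y 3 = 1) :
    ((a + b : ℤ) : ZMod 3) = -1 := by
  have hmod := congrArg (fun z : ℤ => (z : ZMod 3)) h
  push_cast at hmod ⊢
  rwa [ZMod.sq_eq_one_of_ne_zero_three _ (ZMod.intCast_ne_zero_of_gcd_eq_one (by norm_num) hx),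
    ZMod.sq_eq_one_of_ne_zero_three _ (ZMod.intCast_ne_zero_of_gcd_eq_one (by norm_num) hy),
    show (3 : ZMod 3) = 0 from rfl, mul_one, mul_one, zero_mul, zero_mul, add_zero] at hmod

theorem eq_one_of_signs_of_intCast_add_eq_neg_one {a b : ℤ} (ha : a = 1 ∨ a = -1)
    (hb : b = 1 ∨ b = -1) (hab : ((a + b : ℤ) : ZMod 3) = -1) : a = 1 ∧ b = 1 := by
  rcases ha with rfl | rfl <;> rcases hb with rfl | rfl <;> revert hab <;> decide

theorem mul_eq_neg_one_of_sq_add_sq_add_three_mul {x y : ℤ}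
    (h : x ^ 2 + y ^ 2 + 3 * x * y = -1) (habs : |x * y| = 1) : x * y = -1 := by
  rcases abs_eq zero_le_one |>.mp habs with hxy | hxy
  · nlinarith [sq_nonneg x, sq_nonneg y]
  · exact hxy

/-- if `δ₂x² + δ₁y² + 3xy = -1` has an integer solution with
`gcd(x,3) = gcd(y,3) = 1`, then `δ₁ = δ₂ = 1`; moreover the solutions of
`x² + y² + 3xy = -1` with `gcd(x,3) = gcd(y,3) = 1` and `|xy| = 1` are exactly
`(1,-1)` and `(-1,1)`. -/
theorem stmt_7 (δ₁ δ₂ : ℤ) (hδ₁ : δ₁ = 1 ∨ δ₁ = -1) (hδ₂ : δ₂ = 1 ∨ δ₂ = -1) :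
    ((∃ x y : ℤ, δ₂ * x ^ 2 + δ₁ * y ^ 2 + 3 * x * y = -1 ∧
        Int.gcd x 3 = 1 ∧ Int.gcd y 3 = 1) → δ₁ = 1 ∧ δ₂ = 1) ∧
      {p : ℤ × ℤ | p.1 ^ 2 + p.2 ^ 2 + 3 * p.1 * p.2 = -1 ∧
          Int.gcd p.1 3 = 1 ∧ Int.gcd p.2 3 = 1 ∧ |p.1 * p.2| = 1} =
        {(1, -1), (-1, 1)} := by
  refine ⟨fun ⟨x, y, h, hx, hy⟩ => ?_, ?_⟩
  · have hsum := intCast_add_eq_neg_one_of_sign_form h hx hy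
    exact (eq_one_of_signs_of_intCast_add_eq_neg_one hδ₂ hδ₁ hsum).symm
  · ext ⟨x, y⟩
    simp only [Set.mem_ofPred_eq, Set.mem_insert_iff, Set.mem_singleton_iff, Prod.mk.injEq]
    constructor
    · rintro ⟨h, -, -, habs⟩
      exact Int.eq_one_or_neg_one_of_mul_eq_neg_one'
        (mul_eq_neg_one_of_sq_add_sq_add_three_mul h habs)
    · rintro (⟨rfl, rfl⟩ | ⟨rfl, rfl⟩) <;> decide
end

section
/- The set of pairs (x, y) ∈ ℤ² satisfying x² + y² + 3xy = −1 and gcd(x, 3) = gcd(y, 3) = 1 is exactly { ±(−F_{2k−1}, F_{2k+1}) : k ≥ 0 } ∪ { ±(F_{2k+1}, −F_{2k−1}) : k ≥ 0 }. -/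
/-!
Writing `x = -a`, the equation becomes `a² + b² - 3ab = -1`, whose positive solutions
are closed under the Vieta jump `(a, b) ↦ (3a - b, a)`. For `0 < a < b` this strictly
decreases the larger entry, and the descent ends at the unique solution `(1, 1)` with
equal entries. Running the jump backwards from `(1, 1)` produces exactly the pairs of
consecutive terms of `F_{2k-1}`, which satisfies `F_{2k+3} = 3F_{2k+1} - F_{2k-1}`.
Reducing the equation mod 3 forces `x² ≡ y² ≡ 1`, so the coprimality conditions are automatic.
-/

/-- `oddFib k = F_{2k-1}`. -/
def oddFib : ℕ → ℤ
  | 0 => 1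
  | 1 => 1
  | n + 2 => 3 * oddFib (n + 1) - oddFib n

theorem oddFib_sq_add_sq_sub (k : ℕ) :
    oddFib k ^ 2 + oddFib (k + 1) ^ 2 - 3 * oddFib k * oddFib (k + 1) = -1 := by
  induction k with
  | zero => simp [oddFib]
  | succ n ih => rw [oddFib]; linear_combination ih

theorem vieta_jump {a b : ℤ} (ha : 0 < a) (hab : a < b) (h : a ^ 2 + b ^ 2 - 3 * a * b = -1) :
    0 < 3 * a - b ∧ 3 * a - b ≤ a ∧ (3 * a - b) ^ 2 + a ^ 2 - 3 * (3 * a - b) * a = -1 := by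
  have hprod : (3 * a - b) * b = a ^ 2 + 1 := by linear_combination -h
  have hpos : 0 < 3 * a - b := by nlinarith
  refine ⟨hpos, ?_, by linear_combination h⟩
  by_contra! hlt
  nlinarith [mul_le_mul hlt.le hab.le (by linarith) hpos.le]

theorem exists_oddFib_eq_of_le {a b : ℤ} (ha : 0 < a) (hab : a ≤ b)
    (h : a ^ 2 + b ^ 2 - 3 * a * b = -1) : ∃ k, a = oddFib k ∧ b = oddFib (k + 1) := by
  induction hn : b.toNat using Nat.strong_induction_on generalizing a b with
  | _ n ih =>
  rcases hab.eq_or_lt with rfl | hlt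
  · have : a = 1 := by nlinarith
    exact ⟨0, this, this⟩
  · obtain ⟨hpos, hle, h'⟩ := vieta_jump ha hlt h
    obtain ⟨k, hk, hk'⟩ := ih a.toNat (by omega) hpos hle h' rfl
    exact ⟨k + 1, hk', by rw [oddFib]; omega⟩

theorem exists_oddFib_eq_of_pos {a b : ℤ} (ha : 0 < a) (hb : 0 < b)
    (h : a ^ 2 + b ^ 2 - 3 * a * b = -1) :
    ∃ k, (a = oddFib k ∧ b = oddFib (k + 1)) ∨ (a = oddFib (k + 1) ∧ b = oddFib k) := by
  rcases le_total a b with hab | hba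
  · obtain ⟨k, hk⟩ := exists_oddFib_eq_of_le ha hab h
    exact ⟨k, .inl hk⟩
  · obtain ⟨k, hk, hk'⟩ := exists_oddFib_eq_of_le hb hba (by linear_combination h)
    exact ⟨k, .inr ⟨hk', hk⟩⟩

theorem sq_add_sq_add_three_mul_eq_neg_one_iff (p : ℤ × ℤ) :
    p.1 ^ 2 + p.2 ^ 2 + 3 * p.1 * p.2 = -1 ↔ ∃ k : ℕ,
      p = (-oddFib k, oddFib (k + 1)) ∨ p = -(-oddFib k, oddFib (k + 1)) ∨
      p = (oddFib (k + 1), -oddFib k) ∨ p = -(oddFib (k + 1), -oddFib k) := by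
  obtain ⟨x, y⟩ := p
  simp only [Prod.neg_mk, neg_neg, Prod.mk.injEq]
  constructor
  · intro h
    have hxy : x * y < 0 := by nlinarith [sq_nonneg (x + y)]
    rcases lt_or_gt_of_ne (left_ne_zero_of_mul hxy.ne) with hx | hx
    · obtain ⟨k, hk | hk⟩ := exists_oddFib_eq_of_pos (a := -x) (b := y) (by omega)
        (by nlinarith) (by linear_combination h) <;> exact ⟨k, by omega⟩
    · obtain ⟨k, hk | hk⟩ := exists_oddFib_eq_of_pos (a := x) (b := -y) hx
        (by nlinarith) (by linear_combination h) <;> exact ⟨k, by omega⟩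
  · rintro ⟨k, ⟨rfl, rfl⟩ | ⟨rfl, rfl⟩ | ⟨rfl, rfl⟩ | ⟨rfl, rfl⟩⟩ <;>
      linear_combination oddFib_sq_add_sq_sub k

theorem gcd_three_eq_one_of_sq_add_sq_add_three_mul_eq {x y : ℤ}
    (h : x ^ 2 + y ^ 2 + 3 * x * y = -1) : Int.gcd x 3 = 1 := by
  have hmod : (x : ZMod 3) ^ 2 + (y : ZMod 3) ^ 2 + 3 * x * y = -1 := by
    exact_mod_cast congrArg (Int.cast : ℤ → ZMod 3) h
  have hx : (x : ZMod 3) ≠ 0 := by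
    revert hmod
    generalize (x : ZMod 3) = u
    generalize (y : ZMod 3) = v
    decide +revert
  rw [← Int.isCoprime_iff_gcd_eq_one, isCoprime_comm, Prime.coprime_iff_not_dvd Int.prime_three]
  rwa [Ne, ZMod.intCast_zmod_eq_zero_iff_dvd] at hx

theorem fib_add_two_eq_three_mul_sub {F : ℤ → ℤ}
    (hFrec : ∀ m : ℤ, F (m + 1) = F m + F (m - 1)) (m : ℤ) : F (m + 2) = 3 * F m - F (m - 2) := by
  have h₁ := hFrec (m + 1)
  have h₂ := hFrec m
  have h₃ := hFrec (m - 1)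
  rw [add_assoc, one_add_one_eq_two, add_sub_cancel_right] at h₁
  rw [sub_add_cancel, sub_sub, one_add_one_eq_two] at h₃
  linear_combination h₁ + h₂ - h₃

theorem fib_two_mul_sub_one_eq_oddFib {F : ℤ → ℤ} (hFneg1 : F (-1) = 1) (hF₀ : F 0 = 0)
    (hFrec : ∀ m : ℤ, F (m + 1) = F m + F (m - 1)) (k : ℕ) :
    F (2 * k - 1) = oddFib k := by
  induction k using oddFib.induct with
  | case1 => simpa [oddFib] using hFneg1
  | case2 => simpa [oddFib, hF₀, hFneg1] using hFrec 0
  | case3 n ih₁ ih₂ =>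
    have h := fib_add_two_eq_three_mul_sub hFrec (2 * n + 1)
    rw [oddFib, ← ih₁, ← ih₂]
    push_cast
    ring_nf at h ⊢
    exact h

/-- the pairs `(x,y) ∈ ℤ²` with `x² + y² + 3xy = -1` and
`gcd(x,3) = gcd(y,3) = 1` are exactly `±(-F_{2k-1}, F_{2k+1})` and
`±(F_{2k+1}, -F_{2k-1})` for `k ≥ 0`, where `F` is the Fibonacci sequence
extended to all integer indices. -/
theorem stmt_12 (F : ℤ → ℤ) (hFneg1 : F (-1) = 1) (hF₀ : F 0 = 0)
    (hFrec : ∀ m : ℤ, F (m + 1) = F m + F (m - 1)) :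
    {p : ℤ × ℤ | p.1 ^ 2 + p.2 ^ 2 + 3 * p.1 * p.2 = -1 ∧
        Int.gcd p.1 3 = 1 ∧ Int.gcd p.2 3 = 1} =
      {p : ℤ × ℤ | ∃ k : ℕ,
        p = (-F (2 * k - 1), F (2 * k + 1)) ∨ p = -(-F (2 * k - 1), F (2 * k + 1)) ∨
        p = (F (2 * k + 1), -F (2 * k - 1)) ∨ p = -(F (2 * k + 1), -F (2 * k - 1))} := by
  have hodd (k : ℕ) : F (2 * k - 1) = oddFib k ∧ F (2 * k + 1) = oddFib (k + 1) := by
    refine ⟨fib_two_mul_sub_one_eq_oddFib hFneg1 hF₀ hFrec k, ?_⟩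
    rw [← fib_two_mul_sub_one_eq_oddFib hFneg1 hF₀ hFrec]
    push_cast
    ring_nf
  ext p
  simp only [Set.mem_ofPred_eq, hodd, ← sq_add_sq_add_three_mul_eq_neg_one_iff]
  refine ⟨fun h => h.1, fun h => ⟨h, ?_, ?_⟩⟩
  · exact gcd_three_eq_one_of_sq_add_sq_add_three_mul_eq h
  · exact gcd_three_eq_one_of_sq_add_sq_add_three_mul_eq (y := p.1) (by linear_combination h)
end

section
/- The set of pairs (x, y) ∈ ℤ² satisfying −x² + y² + xy = −1 is exactly { ±(F_{2k+1}, F_{2k}) : k ≥ 0 } ∪ { ±(F_{2k+1}, −F_{2k+2}) : k ≥ 0 }. -/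
/-! The equation is `Q(x, y) = 1` for the form `Q(x, y) = x² - xy - y²`. The map
`(x, y) ↦ (y, x - y)` changes the sign of `Q` and, when `0 < y ≤ x`, lowers `x + y`; descending
from a solution of `Q(x, y) = ±1` with `x > 0`, `y ≥ 0` ends at `(1, 0)`, so such a solution is a
consecutive Fibonacci pair `(F_{m+1}, F_m)`, and Cassini's identity `Q(F_{m+1}, F_m) = (-1)^m`
forces `m` to be even when `Q = 1`. The remaining solutions are brought to this quadrant by the
symmetries `(x, y) ↦ (-x, -y)` and `(x, y) ↦ (x, -x - y)` of `Q`. -/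

open Int

def fibForm (x y : ℤ) : ℤ := x ^ 2 - x * y - y ^ 2

lemma fibForm_neg (x y : ℤ) : fibForm (-x) (-y) = fibForm x y := by
  unfold fibForm; ring

lemma fibForm_sub (x y : ℤ) : fibForm y (x - y) = -fibForm x y := by
  unfold fibForm; ring

lemma fibForm_neg_sub (x y : ℤ) : fibForm x (-x - y) = fibForm x y := by
  unfold fibForm; ring

lemma fib_add_one_eq_add_fib_sub_one (n : ℤ) : fib (n + 1) = fib n + fib (n - 1) := by
  have h := fib_add_two (n - 1)
  rw [sub_add_cancel, show n - 1 + 2 = n + 1 by ring] at h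
  rw [h, add_comm]

lemma eq_fib_of_recurrence {F : ℤ → ℤ} (hFneg1 : F (-1) = 1) (hF0 : F 0 = 0)
    (hFrec : ∀ m, F (m + 1) = F m + F (m - 1)) : F = fib := by
  suffices h : ∀ n, F n = fib n ∧ F (n - 1) = fib (n - 1) from funext fun n => (h n).1
  intro n
  induction n using Int.induction_on with
  | zero => exact ⟨hF0, hFneg1⟩
  | succ i ih =>
    rw [add_sub_cancel_right]
    exact ⟨by rw [hFrec, fib_add_one_eq_add_fib_sub_one, ih.1, ih.2], ih.1⟩
  | pred i ih =>
    refine ⟨ih.2, ?_⟩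
    have hF := hFrec (-i - 1)
    have hfib := fib_add_one_eq_add_fib_sub_one (-i - 1)
    rw [sub_add_cancel] at hF hfib
    linarith [ih.1, ih.2]

lemma fibForm_fib (n : ℤ) : fibForm (fib (n + 1)) (fib n) = (-1) ^ n.natAbs := by
  unfold fibForm
  linear_combination
    fib_succ_mul_fib_pred_sub_fib_sq n + fib (n + 1) * fib_add_one_eq_add_fib_sub_one n

lemma fibForm_fib_two_mul_add_one (k : ℤ) : fibForm (fib (2 * k + 1)) (fib (2 * k)) = 1 := by
  rw [fibForm_fib, Even.neg_one_pow (natAbs_even.2 (even_two_mul k))]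

lemma fibForm_fib_two_mul_add_one_neg_fib (k : ℤ) :
    fibForm (fib (2 * k + 1)) (-fib (2 * k + 2)) = 1 := by
  rw [show -fib (2 * k + 2) = -fib (2 * k + 1) - fib (2 * k) by rw [fib_add_two]; ring,
    fibForm_neg_sub, fibForm_fib_two_mul_add_one]

theorem exists_fib_of_fibForm_sq_eq_one {x y : ℤ} (hx : 0 < x) (hy : 0 ≤ y)
    (h : fibForm x y ^ 2 = 1) : ∃ m : ℕ, x = fib (m + 1) ∧ y = fib m := by
  rcases hy.eq_or_lt with rfl | hy
  · refine ⟨0, ?_, rfl⟩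
    rw [fibForm, mul_zero, sub_zero, zero_pow two_ne_zero, sub_zero, ← pow_mul,
      pow_eq_one_iff_of_nonneg hx.le (by norm_num)] at h
    simp [h]
  · have hyx : y ≤ x := by
      by_contra! hxy
      have : fibForm x y ≤ -2 := by
        unfold fibForm
        nlinarith [mul_pos hx (sub_pos.2 hxy)]
      nlinarith
    obtain ⟨m, hm1, hm2⟩ := exists_fib_of_fibForm_sq_eq_one hy (sub_nonneg.2 hyx)
      (by rw [fibForm_sub, neg_sq, h])
    refine ⟨m + 1, ?_, by push_cast; exact hm1⟩
    push_cast
    rw [fib_add_one_eq_add_fib_sub_one, add_sub_cancel_right, ← hm1, ← hm2]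
    ring
termination_by (x + y).toNat
decreasing_by omega

theorem exists_fib_two_mul_of_fibForm_eq_one {x y : ℤ} (hx : 0 < x) (hy : 0 ≤ y)
    (h : fibForm x y = 1) : ∃ k : ℕ, x = fib (2 * k + 1) ∧ y = fib (2 * k) := by
  obtain ⟨m, rfl, rfl⟩ := exists_fib_of_fibForm_sq_eq_one hx hy (by rw [h, one_pow])
  rw [fibForm_fib, natAbs_natCast, neg_one_pow_eq_one_iff_even (by norm_num)] at h
  obtain ⟨k, rfl⟩ := h
  exact ⟨k, by push_cast; ring_nf, by push_cast; ring_nf⟩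

theorem exists_fib_of_fibForm_eq_one_of_pos {x y : ℤ} (hx : 0 < x) (h : fibForm x y = 1) :
    ∃ k : ℕ, (x = fib (2 * k + 1) ∧ y = fib (2 * k)) ∨
      (x = fib (2 * k + 1) ∧ y = -fib (2 * k + 2)) := by
  rcases le_or_gt 0 y with hy | hy
  · obtain ⟨k, hk⟩ := exists_fib_two_mul_of_fibForm_eq_one hx hy h
    exact ⟨k, Or.inl hk⟩
  · have hxy : x + y ≤ 0 := by
      unfold fibForm at h
      nlinarith
    obtain ⟨k, hx', hy'⟩ := exists_fib_two_mul_of_fibForm_eq_one hx (by omega : 0 ≤ -x - y)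
      (by rw [fibForm_neg_sub, h])
    refine ⟨k, Or.inr ⟨hx', ?_⟩⟩
    rw [fib_add_two, ← hx', ← hy']
    ring

/-- the pairs `(x,y) ∈ ℤ²` with `-x² + y² + xy = -1` are exactly
`±(F_{2k+1}, F_{2k})` and `±(F_{2k+1}, -F_{2k+2})` for `k ≥ 0`, where `F` is the
Fibonacci sequence extended to all integer indices. -/
theorem stmt_13 (F : ℤ → ℤ) (hFneg1 : F (-1) = 1) (hF0 : F 0 = 0)
    (hFrec : ∀ m : ℤ, F (m + 1) = F m + F (m - 1)) :
    {p : ℤ × ℤ | -p.1 ^ 2 + p.2 ^ 2 + p.1 * p.2 = -1} =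
      {p : ℤ × ℤ | ∃ k : ℕ,
        p = (F (2 * k + 1), F (2 * k)) ∨ p = -(F (2 * k + 1), F (2 * k)) ∨
        p = (F (2 * k + 1), -F (2 * k + 2)) ∨ p = -(F (2 * k + 1), -F (2 * k + 2))} := by
  obtain rfl := eq_fib_of_recurrence hFneg1 hF0 hFrec
  ext ⟨x, y⟩
  have hform : -x ^ 2 + y ^ 2 + x * y = -1 ↔ fibForm x y = 1 := by
    unfold fibForm; constructor <;> intro h <;> linarith
  simp only [Set.mem_ofPred_eq, Prod.ext_iff, Prod.fst_neg, Prod.snd_neg, hform]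
  constructor
  · intro h
    rcases lt_trichotomy x 0 with hx | rfl | hx
    · obtain ⟨k, hk | hk⟩ :=
        exists_fib_of_fibForm_eq_one_of_pos (neg_pos.2 hx) (by rwa [← fibForm_neg] at h)
      · exact ⟨k, Or.inr (Or.inl ⟨by omega, by omega⟩)⟩
      · exact ⟨k, Or.inr (Or.inr (Or.inr ⟨by omega, by omega⟩))⟩
    · unfold fibForm at h
      nlinarith
    · obtain ⟨k, hk | hk⟩ := exists_fib_of_fibForm_eq_one_of_pos hx h
      · exact ⟨k, Or.inl hk⟩
      · exact ⟨k, Or.inr (Or.inr (Or.inl hk))⟩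
  · rintro ⟨k, ⟨rfl, rfl⟩ | ⟨rfl, rfl⟩ | ⟨rfl, rfl⟩ | ⟨rfl, rfl⟩⟩
    · exact fibForm_fib_two_mul_add_one k
    · rw [fibForm_neg, fibForm_fib_two_mul_add_one]
    · exact fibForm_fib_two_mul_add_one_neg_fib k
    · rw [fibForm_neg, fibForm_fib_two_mul_add_one_neg_fib]
end

section
/- Let p > q ≥ 1 be coprime integers with p > 1. Then p² − pq + 1 is not congruent to pq − 1 modulo p², and (p² − pq + 1)(pq − 1) is not congruent to 1 modulo p². In other words, p² − pq + 1 ≢ (pq − 1)^{±1} (mod p²). -/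
/-! Modulo `p²` one has `p² - pq + 1 ≡ -(pq - 1)` and `(pq - 1)² ≡ 1 - 2(pq - 1)`, so each of the two
congruences would give `p² ∣ 2(pq - 1)`. Reducing mod `p` this forces `p ∣ 2`; then `p² ∣ 2pq`, hence
`p² ∣ 2`, which is impossible for a non-unit `p` because `2` is squarefree. -/

theorem Int.not_sq_dvd_two_mul_mul_sub_one {p : ℤ} (q : ℤ) (hp : ¬IsUnit p) :
    ¬p ^ 2 ∣ 2 * (p * q - 1) := by
  intro h
  have two_eq : 2 * (p * q) - 2 * (p * q - 1) = 2 := by ring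
  have hp2 : p ∣ 2 := by
    rw [← two_eq]
    exact dvd_sub (Dvd.intro (2 * q) (by ring)) ((dvd_pow_self p two_ne_zero).trans h)
  obtain ⟨r, hr⟩ := hp2
  have hsq : p ^ 2 ∣ 2 := by
    rw [← two_eq]
    exact dvd_sub (Dvd.intro (r * q) (by rw [hr]; ring)) h
  exact hp (Int.prime_two.squarefree p (by rwa [← sq]))

theorem stmt_19_general (p q : ℤ) (hp : p > 1) :
    ¬ Int.ModEq (p ^ 2) (p ^ 2 - p * q + 1) (p * q - 1) ∧
      ¬ Int.ModEq (p ^ 2) ((p ^ 2 - p * q + 1) * (p * q - 1)) 1 := by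
  have hunit : ¬IsUnit p := by rw [Int.isUnit_iff]; omega
  have hx := Int.not_sq_dvd_two_mul_mul_sub_one q hunit
  refine ⟨fun h => hx ?_, fun h => hx ?_⟩
  · have hd := h.symm.dvd
    rw [show p ^ 2 - p * q + 1 - (p * q - 1) = p ^ 2 * 1 - 2 * (p * q - 1) by ring] at hd
    exact (dvd_sub_right (dvd_mul_right _ _)).mp hd
  · have hd := h.dvd
    rw [show 1 - (p ^ 2 - p * q + 1) * (p * q - 1) = p ^ 2 * (q ^ 2 - p * q + 1) - 2 * (p * q - 1) by
      ring] at hd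
    exact (dvd_sub_right (dvd_mul_right _ _)).mp hd

/-- for coprime integers `p > q ≥ 1` with `p > 1`, one has
`p² - pq + 1 ≢ pq - 1 (mod p²)` and `(p² - pq + 1)(pq - 1) ≢ 1 (mod p²)`,
i.e. `p² - pq + 1 ≢ (pq - 1)^{±1} (mod p²)`. -/
theorem stmt_19 (p q : ℤ) (hpq : p > q) (hq : q ≥ 1) (hp : p > 1)
    (hcop : Int.gcd p q = 1) :
    ¬ Int.ModEq (p ^ 2) (p ^ 2 - p * q + 1) (p * q - 1) ∧
      ¬ Int.ModEq (p ^ 2) ((p ^ 2 - p * q + 1) * (p * q - 1)) 1 :=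
  stmt_19_general p q hp
end
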